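/- arXiv:1202.5189 — 3 statements merged into one kernel-verified Lean document; each statement's English description precedes it below -/
import Mathlib

section
/- With γ_n = nπ/l, b_n = γ_n² + λ²/4, g_n = (α + ε b_n)/2, a_λ = α + ελ²/4, and p_λ = π²/(επ² + a_λ l²), for every n ≥ 1 with b_n < g_n² one has g_n - √(g_n² - b_n) ≥ p_λ; consequently for all t ≥ 0, exp(-t(g_n - ω_n)) ≤ exp(-p_λ t), where ω_n = √(g_n² - b_n). -/
open Real

/- Since `g - √(g² - b) = b / (g + √(g² - b)) ≥ b / (2g) = b / (α + ε b)`, and `b ↦ b / (α + ε b)` is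
increasing, the gap `g_n - ω_n` is bounded below by its value at the lowest mode `b_1 = π²/l² + λ²/4`,
which dominates `p_λ = (π²/l²) / (α + ε b_1)`. -/

/-- The identity `(g - ω) · 2g - b = (g - ω)²`, with `ω² = g² - b`, makes this hold for `b` of either
sign. -/
theorem div_two_mul_le_sub_sqrt_sq_sub {g b : ℝ} (hg : 0 < g) (hb : b ≤ g ^ 2) :
    b / (2 * g) ≤ g - √(g ^ 2 - b) := by
  have hω : √(g ^ 2 - b) ^ 2 = g ^ 2 - b := sq_sqrt (by linarith)
  rw [div_le_iff₀ (by positivity)]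
  nlinarith [sq_nonneg (g - √(g ^ 2 - b))]

theorem div_add_mul_le_div_add_mul {α ε x y : ℝ} (hα : 0 < α) (hε : 0 ≤ ε) (hx : 0 ≤ x)
    (hxy : x ≤ y) : x / (α + ε * x) ≤ y / (α + ε * y) := by
  rw [div_le_div_iff₀ (by positivity) (by nlinarith)]
  nlinarith

theorem pi_sq_div_sq_le_natCast_mul_pi_div_sq {l : ℝ} (hl : 0 < l) {n : ℕ} (hn : 1 ≤ n) :
    π ^ 2 / l ^ 2 ≤ (n * π / l) ^ 2 := by
  have hn' : (1 : ℝ) ≤ n := by exact_mod_cast hn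
  rw [div_pow, mul_pow]
  gcongr
  exact le_mul_of_one_le_left (by positivity) (one_le_pow₀ hn')

theorem g_sub_omega_ge_p_general (l lam alpha eps : ℝ) (hl : 0 < l)
    (halpha : 0 < alpha) (heps : 0 < eps) (n : ℕ) (hn : 1 ≤ n)
    (γ b g ω a p : ℝ)
    (hγ : γ = n * π / l) (hb : b = γ ^ 2 + lam ^ 2 / 4)
    (hg : g = (alpha + eps * b) / 2) (hlt : b < g ^ 2)
    (hω : ω = Real.sqrt (g ^ 2 - b))
    (ha : a = alpha + eps * lam ^ 2 / 4)
    (hp : p = π ^ 2 / (eps * π ^ 2 + a * l ^ 2)) :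
    p ≤ g - ω ∧ ∀ t : ℝ, 0 ≤ t →
      Real.exp (-t * (g - ω)) ≤ Real.exp (-p * t) := by
  obtain ⟨b₁, hb₁⟩ : ∃ b₁, b₁ = π ^ 2 / l ^ 2 + lam ^ 2 / 4 := ⟨_, rfl⟩
  have hb₁_nonneg : 0 ≤ b₁ := by rw [hb₁]; positivity
  have hp₁ : p = π ^ 2 / l ^ 2 / (alpha + eps * b₁) := by
    rw [hp, ha, hb₁]
    field_simp
    ring
  have hb₁_le : b₁ ≤ b := by
    rw [hb, hγ, hb₁]
    gcongr
    exact pi_sq_div_sq_le_natCast_mul_pi_div_sq hl hn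
  have hgap : p ≤ g - ω := calc
    p ≤ b₁ / (alpha + eps * b₁) := by
      rw [hp₁]
      gcongr
      linarith [sq_nonneg lam]
    _ ≤ b / (alpha + eps * b) :=
      div_add_mul_le_div_add_mul halpha heps.le hb₁_nonneg hb₁_le
    _ = b / (2 * g) := by rw [hg]; ring
    _ ≤ g - ω := hω ▸ div_two_mul_le_sub_sqrt_sq_sub (by rw [hg]; nlinarith) hlt.le
  refine ⟨hgap, fun t ht => exp_le_exp.mpr ?_⟩
  nlinarith [mul_le_mul_of_nonneg_left hgap ht]

theorem g_sub_omega_ge_p (l lam alpha eps : ℝ) (hl : 0 < l) (hlam : 0 < lam)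
    (halpha : 0 < alpha) (heps : 0 < eps) (n : ℕ) (hn : 1 ≤ n)
    (γ b g ω a p : ℝ)
    (hγ : γ = n * π / l) (hb : b = γ ^ 2 + lam ^ 2 / 4)
    (hg : g = (alpha + eps * b) / 2) (hlt : b < g ^ 2)
    (hω : ω = Real.sqrt (g ^ 2 - b))
    (ha : a = alpha + eps * lam ^ 2 / 4)
    (hp : p = π ^ 2 / (eps * π ^ 2 + a * l ^ 2)) :
    p ≤ g - ω ∧ ∀ t : ℝ, 0 ≤ t →
      Real.exp (-t * (g - ω)) ≤ Real.exp (-p * t) :=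
  g_sub_omega_ge_p_general l lam alpha eps hl halpha heps n hn γ b g ω a p hγ hb hg hlt hω ha hp
end

section
/- For every positive integer n with g_n² > b_n, one has g_n - ω_n = b_n/(g_n + ω_n) ≤ 2/ε + λ²/(4 ε q_λ), where ω_n = √(g_n² - b_n), q_λ = (α + ελ²/4 + ε(π/l)²)/2. -/
open Real

lemma sub_eq_div_add_of_sq_eq {g s b : ℝ} (hs : s ^ 2 = g ^ 2 - b) (h : g + s ≠ 0) :
    g - s = b / (g + s) := by
  rw [eq_div_iff h]
  linear_combination -hs

lemma div_half_add_le_two_div {alpha eps b s : ℝ} (halpha : 0 < alpha) (heps : 0 < eps)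
    (hb : 0 ≤ b) (hs : 0 ≤ s) :
    b / ((alpha + eps * b) / 2 + s) ≤ 2 / eps := by
  have hg : 0 < (alpha + eps * b) / 2 := by positivity
  calc b / ((alpha + eps * b) / 2 + s) ≤ b / ((alpha + eps * b) / 2) :=
        div_le_div_of_nonneg_left hb hg (le_add_of_nonneg_right hs)
    _ ≤ 2 / eps := by
        rw [div_le_div_iff₀ hg heps]
        nlinarith

theorem g_sub_omega_bound_general (l lam alpha eps : ℝ)
    (halpha : 0 < alpha) (heps : 0 < eps)
    (γ b g ω q : ℝ)
    (hb : b = γ ^ 2 + lam ^ 2 / 4)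
    (hg : g = (alpha + eps * b) / 2) (hlt : b < g ^ 2)
    (hω : ω = Real.sqrt (g ^ 2 - b))
    (hq : q = (alpha + eps * lam ^ 2 / 4 + eps * (π / l) ^ 2) / 2) :
    g - ω = b / (g + ω) ∧ b / (g + ω) ≤ 2 / eps + lam ^ 2 / (4 * eps * q) := by
  have hb0 : 0 ≤ b := hb ▸ by positivity
  have hq0 : 0 ≤ q := hq ▸ by positivity
  have hω0 : 0 ≤ ω := hω ▸ sqrt_nonneg _
  have hg0 : 0 < g := hg ▸ by positivity
  refine ⟨sub_eq_div_add_of_sq_eq (hω ▸ sq_sqrt (by linarith)) (by positivity), ?_⟩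
  calc b / (g + ω) ≤ 2 / eps := hg ▸ div_half_add_le_two_div halpha heps hb0 hω0
    _ ≤ 2 / eps + lam ^ 2 / (4 * eps * q) := le_add_of_nonneg_right (by positivity)

theorem g_sub_omega_bound (l lam alpha eps : ℝ) (hl : 0 < l) (hlam : 0 < lam)
    (halpha : 0 < alpha) (heps : 0 < eps) (n : ℕ) (hn : 0 < n)
    (γ b g ω q : ℝ)
    (hγ : γ = n * π / l) (hb : b = γ ^ 2 + lam ^ 2 / 4)
    (hg : g = (alpha + eps * b) / 2) (hlt : b < g ^ 2)
    (hω : ω = Real.sqrt (g ^ 2 - b))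
    (hq : q = (alpha + eps * lam ^ 2 / 4 + eps * (π / l) ^ 2) / 2) :
    g - ω = b / (g + ω) ∧ b / (g + ω) ≤ 2 / eps + lam ^ 2 / (4 * eps * q) :=
  g_sub_omega_bound_general l lam alpha eps halpha heps γ b g ω q hb hg hlt hω hq
end

section
/- Let c, c₁ > 0 and let X ∈ [0,1) satisfy X < c²/n² for an integer n ≥ c(1+c₁). Then ∫₀^X (X - y)²/(1-y)^{5/2} dy ≤ (2/3) X² [ (c₁+1)³ / (c₁(c₁+2))^{3/2} − 1 ]. -/
/-!
On `[0, X]` we have `(X - y)² ≤ X²`, so the integral is at most `X² ∫₀^X (1 - y)^(-5/2) dy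
= (2/3) X² ((1 - X)^(-3/2) - 1)`. The hypotheses give `X ≤ c²/n² ≤ 1/(1 + c₁)²`, i.e.
`1 - X ≥ c₁(c₁ + 2)/(c₁ + 1)²`, which bounds `(1 - X)^(-3/2)`.
-/

open Real

theorem integral_inv_one_sub_rpow {X p : ℝ} (hX : X < 1) (hp : p ≠ 1) :
    ∫ y in (0:ℝ)..X, ((1 - y) ^ p)⁻¹ = ((1 - X) ^ (1 - p) - 1) / (p - 1) := by
  have hpos : ∀ y ∈ Set.uIcc 0 X, 0 < 1 - y := fun y hy => by
    rcases Set.mem_uIcc.1 hy with h | h <;> linarith [h.1, h.2]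
  have h0 : (0:ℝ) ∉ Set.uIcc (1 - X) 1 := fun h => by
    rcases Set.mem_uIcc.1 h with h | h <;> linarith [h.1, h.2]
  rw [intervalIntegral.integral_congr (g := fun y => (fun u => u ^ (-p)) (1 - y))
      fun y hy => (rpow_neg (hpos y hy).le p).symm,
    intervalIntegral.integral_comp_sub_left (fun u => u ^ (-p)), sub_zero,
    integral_rpow (Or.inr ⟨by contrapose! hp; linarith, h0⟩), one_rpow,
    neg_add_eq_sub, ← neg_sub p 1, div_neg, ← neg_div, neg_sub]

theorem integral_sq_sub_div_one_sub_rpow_le {X p : ℝ} (hX0 : 0 ≤ X) (hX1 : X < 1) :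
    ∫ y in (0:ℝ)..X, (X - y) ^ 2 / (1 - y) ^ p ≤ X ^ 2 * ∫ y in (0:ℝ)..X, ((1 - y) ^ p)⁻¹ := by
  have hpos : ∀ y ∈ Set.Icc 0 X, 0 < (1 - y) ^ p := fun y hy => rpow_pos_of_pos (by linarith [hy.2]) p
  have hcont : ContinuousOn (fun y : ℝ => (1 - y) ^ p) (Set.uIcc 0 X) := by
    rw [Set.uIcc_of_le hX0]
    exact ContinuousOn.rpow_const (by fun_prop) fun y hy => Or.inl (by linarith [hy.2])
  rw [← intervalIntegral.integral_const_mul]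
  refine intervalIntegral.integral_mono_on hX0 ?_ ?_ fun y hy => ?_
  · refine ContinuousOn.intervalIntegrable ((ContinuousOn.pow (by fun_prop) 2).div hcont fun y hy => ?_)
    rw [Set.uIcc_of_le hX0] at hy
    exact (hpos y hy).ne'
  · refine ContinuousOn.intervalIntegrable (continuousOn_const.mul (hcont.inv₀ fun y hy => ?_))
    rw [Set.uIcc_of_le hX0] at hy
    exact (hpos y hy).ne'
  · rw [← div_eq_mul_inv]
    gcongr
    · exact (hpos y hy).le
    · linarith [hy.2]
    · linarith [hy.1]

theorem one_sub_rpow_neg_le {X c s : ℝ} (hc : 0 < c) (hs : 0 ≤ s) (hX : X ≤ 1 / (1 + c) ^ 2) :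
    (1 - X) ^ (-s) ≤ ((c + 1) ^ 2 / (c * (c + 2))) ^ s := by
  have hgap : c * (c + 2) / (c + 1) ^ 2 ≤ 1 - X := by
    have : 1 - 1 / (1 + c) ^ 2 = c * (c + 2) / (c + 1) ^ 2 := by field_simp; ring
    linarith
  have hpos : 0 < c * (c + 2) / (c + 1) ^ 2 := by positivity
  have hX1 : 0 < 1 - X := hpos.trans_le hgap
  rw [rpow_neg hX1.le, ← inv_rpow hX1.le, ← inv_div]
  exact rpow_le_rpow (inv_pos.2 hX1).le (inv_anti₀ hpos hgap) hs

theorem remainder_integral_bound_general (c c₁ X : ℝ) (n : ℤ)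
    (hc : 0 < c) (hc₁ : 0 < c₁) (hX0 : 0 ≤ X)
    (hXn : X < c ^ 2 / (n : ℝ) ^ 2) (hn : c * (1 + c₁) ≤ (n : ℝ)) :
    ∫ y in (0:ℝ)..X, (X - y) ^ 2 / (1 - y) ^ ((5:ℝ)/2) ≤
      (2/3) * X ^ 2 * ((c₁ + 1) ^ 3 / (c₁ * (c₁ + 2)) ^ ((3:ℝ)/2) - 1) := by
  have hcn : 0 < c * (1 + c₁) := by positivity
  have hX : X ≤ 1 / (1 + c₁) ^ 2 := by
    refine hXn.le.trans ?_
    rw [div_le_div_iff₀ (by nlinarith) (by positivity), one_mul, ← mul_pow]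
    exact pow_le_pow_left₀ hcn.le hn 2
  have hX1 : X < 1 := hX.trans_lt <| (div_lt_one (by positivity)).2 (by nlinarith)
  have hpow : ((c₁ + 1) ^ 2 / (c₁ * (c₁ + 2))) ^ ((3:ℝ)/2) =
      (c₁ + 1) ^ 3 / (c₁ * (c₁ + 2)) ^ ((3:ℝ)/2) := by
    rw [div_rpow (by positivity) (by positivity), ← rpow_natCast, ← rpow_mul (by positivity)]
    norm_num
  calc ∫ y in (0:ℝ)..X, (X - y) ^ 2 / (1 - y) ^ ((5:ℝ)/2)
      ≤ X ^ 2 * (((1 - X) ^ (-((3:ℝ)/2)) - 1) / (3/2)) := by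
        refine (integral_sq_sub_div_one_sub_rpow_le hX0 hX1).trans_eq ?_
        rw [integral_inv_one_sub_rpow hX1 (by norm_num)]
        norm_num
    _ ≤ (2/3) * X ^ 2 * ((c₁ + 1) ^ 3 / (c₁ * (c₁ + 2)) ^ ((3:ℝ)/2) - 1) := by
        rw [← hpow]
        have hbound := one_sub_rpow_neg_le hc₁ (by norm_num : (0:ℝ) ≤ 3/2) hX
        nlinarith [sq_nonneg X]

theorem remainder_integral_bound (c c₁ X : ℝ) (n : ℤ)
    (hc : 0 < c) (hc₁ : 0 < c₁) (hX0 : 0 ≤ X) (hX1 : X < 1)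
    (hXn : X < c ^ 2 / (n : ℝ) ^ 2) (hn : c * (1 + c₁) ≤ (n : ℝ)) :
    ∫ y in (0:ℝ)..X, (X - y) ^ 2 / (1 - y) ^ ((5:ℝ)/2) ≤
      (2/3) * X ^ 2 * ((c₁ + 1) ^ 3 / (c₁ * (c₁ + 2)) ^ ((3:ℝ)/2) - 1) :=
  remainder_integral_bound_general c c₁ X n hc hc₁ hX0 hXn hn
end
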